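/- A forward complete control system Σ=(X,𝒰,φ) is uniformly locally stable (ULS) and uniformly globally bounded (UGB) if and only if it is uniformly globally stable (UGS). -/

import Mathlib

open Set Filter

/-- Class `K`: continuous, strictly increasing on `[0,∞)` and vanishing at `0`. -/
def ClassK (γ : ℝ → ℝ) : Prop :=
  ContinuousOn γ (Ici 0) ∧ StrictMonoOn γ (Ici 0) ∧ γ 0 = 0

/-- Class `K∞`: class `K` and unbounded. -/
def ClassKinf (γ : ℝ → ℝ) : Prop :=
  ClassK γ ∧ ∀ c : ℝ, ∃ r : ℝ, 0 ≤ r ∧ c ≤ γ r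

/-- The class `K∞ ∪ {0}`. -/
def ClassKinf0 (γ : ℝ → ℝ) : Prop :=
  ClassKinf γ ∨ ∀ r : ℝ, 0 ≤ r → γ r = 0

/-- The class `K ∪ {0}`. -/
def ClassK0 (γ : ℝ → ℝ) : Prop :=
  ClassK γ ∨ ∀ r : ℝ, 0 ≤ r → γ r = 0

/-- Class `L`: continuous, strictly decreasing on `[0,∞)` with limit `0` at infinity. -/
def ClassL (γ : ℝ → ℝ) : Prop :=
  ContinuousOn γ (Ici 0) ∧ StrictAntiOn γ (Ici 0) ∧ Tendsto γ atTop (nhds 0)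

/-- Class `KL`. -/
def ClassKL (β : ℝ → ℝ → ℝ) : Prop :=
  ContinuousOn (fun p : ℝ × ℝ => β p.1 p.2) ((Ici 0) ×ˢ (Ici 0)) ∧
  (∀ t : ℝ, 0 ≤ t → ClassK (fun r => β r t)) ∧
  ∀ r : ℝ, 0 < r → StrictAntiOn (β r) (Ici 0) ∧ Tendsto (β r) atTop (nhds 0)

/-- A forward complete control system `Σ = (X, 𝒰, φ)`: inputs are functions
`u : ℝ₊ → U` (modelled as functions on `ℝ`, with only `t ≥ 0` relevant);
the set `inputs` of admissible inputs carries a norm `Unorm`, is shift invariant and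
closed under concatenation; the transition map `phi` satisfies the identity property,
causality, continuity in time and the cocycle property. -/
structure ControlSystem (X U : Type*) [NormedAddCommGroup X] [NormedSpace ℝ X] [Zero U] where
  /-- the set of admissible input functions -/
  inputs : Set (ℝ → U)
  /-- the norm of the input space -/
  Unorm : (ℝ → U) → ℝ
  Unorm_nonneg : ∀ u, 0 ≤ Unorm u
  /-- the zero input is admissible -/
  zero_mem : (fun _ : ℝ => (0 : U)) ∈ inputs
  Unorm_zero : Unorm (fun _ : ℝ => (0 : U)) = 0
  /-- the transition map `φ(t,x,u)` -/
  phi : ℝ → X → (ℝ → U) → X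
  /-- axiom of shift invariance -/
  shift_mem : ∀ u ∈ inputs, ∀ τ : ℝ, 0 ≤ τ → (fun s => u (s + τ)) ∈ inputs
  shift_norm : ∀ u ∈ inputs, ∀ τ : ℝ, 0 ≤ τ → Unorm (fun s => u (s + τ)) ≤ Unorm u
  /-- axiom of concatenation -/
  concat_mem : ∀ u₁ ∈ inputs, ∀ u₂ ∈ inputs, ∀ t : ℝ, 0 < t →
    (fun s => if s ≤ t then u₁ s else u₂ (s - t)) ∈ inputs
  /-- identity property -/
  identity : ∀ x u, phi 0 x u = x
  /-- causality -/
  causality : ∀ t : ℝ, 0 ≤ t → ∀ x : X, ∀ u ∈ inputs, ∀ v ∈ inputs,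
    (∀ s ∈ Icc (0:ℝ) t, u s = v s) → phi t x u = phi t x v
  /-- continuity of trajectories -/
  cont : ∀ x : X, ∀ u ∈ inputs, ContinuousOn (fun t => phi t x u) (Ici 0)
  /-- cocycle property -/
  cocycle : ∀ t : ℝ, 0 ≤ t → ∀ h : ℝ, 0 ≤ h → ∀ x : X, ∀ u ∈ inputs,
    phi h (phi t x u) (fun s => u (s + t)) = phi (t + h) x u

namespace ControlSystem

variable {X U : Type*} [NormedAddCommGroup X] [NormedSpace ℝ X] [Zero U]

/-- the zero input -/
def zeroIn : ℝ → U := fun _ => 0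

/-- Uniform local stability. -/
def ULS (S : ControlSystem X U) : Prop :=
  ∃ σ γ, ClassKinf σ ∧ ClassKinf0 γ ∧ ∃ r : ℝ, 0 < r ∧
    ∀ t : ℝ, 0 ≤ t → ∀ x : X, ‖x‖ ≤ r → ∀ u ∈ S.inputs, S.Unorm u ≤ r →
      ‖S.phi t x u‖ ≤ σ ‖x‖ + γ (S.Unorm u)

/-- Uniform global boundedness. -/
def UGB (S : ControlSystem X U) : Prop :=
  ∃ σ γ c, ClassKinf σ ∧ ClassKinf0 γ ∧ (0:ℝ) < c ∧
    ∀ t : ℝ, 0 ≤ t → ∀ x : X, ∀ u ∈ S.inputs,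
      ‖S.phi t x u‖ ≤ σ ‖x‖ + γ (S.Unorm u) + c

/-- Uniform global stability. -/
def UGS (S : ControlSystem X U) : Prop :=
  ∃ σ γ, ClassKinf σ ∧ ClassKinf0 γ ∧
    ∀ t : ℝ, 0 ≤ t → ∀ x : X, ∀ u ∈ S.inputs,
      ‖S.phi t x u‖ ≤ σ ‖x‖ + γ (S.Unorm u)

end ControlSystem

lemma ClassK.nonneg {γ : ℝ → ℝ} (h : ClassK γ) {s : ℝ} (hs : 0 ≤ s) : 0 ≤ γ s :=
  h.2.2 ▸ h.2.1.monotoneOn self_mem_Ici hs hs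

lemma ClassKinf0.nonneg {γ : ℝ → ℝ} (h : ClassKinf0 γ) {s : ℝ} (hs : 0 ≤ s) : 0 ≤ γ s := by
  rcases h with h | h
  · exact h.1.nonneg hs
  · exact (h s hs).ge

lemma ClassKinf.classKinf0 {γ : ℝ → ℝ} (h : ClassKinf γ) : ClassKinf0 γ := Or.inl h

lemma ClassKinf0.map_zero {γ : ℝ → ℝ} (h : ClassKinf0 γ) : γ 0 = 0 := by
  rcases h with h | h
  · exact h.1.2.2
  · exact h 0 le_rfl

lemma ClassKinf0.continuousOn {γ : ℝ → ℝ} (h : ClassKinf0 γ) : ContinuousOn γ (Ici 0) := by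
  rcases h with h | h
  · exact h.1.1
  · exact continuousOn_const.congr h

lemma ClassKinf0.monotoneOn {γ : ℝ → ℝ} (h : ClassKinf0 γ) : MonotoneOn γ (Ici 0) := by
  rcases h with h | h
  · exact h.1.2.1.monotoneOn
  · intro a ha b hb _
    rw [h a ha, h b hb]

lemma classKinf_const_mul {d : ℝ} (hd : 0 < d) : ClassKinf (fun s => d * s) := by
  refine ⟨⟨(continuous_const_mul d).continuousOn, fun a _ b _ hab => by
    simpa using mul_lt_mul_of_pos_left hab hd, mul_zero d⟩, fun c => ?_⟩
  refine ⟨max 0 (c / d), le_max_left _ _, ?_⟩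
  calc c = d * (c / d) := (mul_div_cancel₀ c hd.ne').symm
    _ ≤ d * max 0 (c / d) := mul_le_mul_of_nonneg_left (le_max_right _ _) hd.le

lemma ClassKinf0.add_classKinf {f g : ℝ → ℝ} (hf : ClassKinf0 f) (hg : ClassKinf g) :
    ClassKinf (fun s => f s + g s) := by
  refine ⟨⟨hf.continuousOn.add hg.1.1, fun a ha b hb hab => ?_, ?_⟩, fun c => ?_⟩
  · exact add_lt_add_of_le_of_lt (hf.monotoneOn ha hb hab.le) (hg.1.2.1 ha hb hab)
  · simp only [hf.map_zero, hg.1.2.2, add_zero]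
  · obtain ⟨r, hr, hcr⟩ := hg.2 c
    exact ⟨r, hr, le_add_of_nonneg_of_le (hf.nonneg hr) hcr⟩

namespace ControlSystem

variable {X U : Type*} [NormedAddCommGroup X] [NormedSpace ℝ X] [Zero U]

/-- Outside the `r`-ball, where only the UGB estimate is available, its constant `c` is
absorbed by the linear term `(c / r) * (‖x‖ + ‖u‖)`, which is at least `c` there. -/
theorem UGS_of_ULS_of_UGB {S : ControlSystem X U} (hULS : S.ULS) (hUGB : S.UGB) : S.UGS := by
  obtain ⟨σ₁, γ₁, hσ₁, hγ₁, r, hr, hloc⟩ := hULS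
  obtain ⟨σ₂, γ₂, c, hσ₂, hγ₂, hc, hbdd⟩ := hUGB
  set d := c / r
  have hd : 0 < d := div_pos hc hr
  refine ⟨fun s => σ₁ s + (σ₂ s + d * s), fun s => γ₁ s + (γ₂ s + d * s),
    hσ₁.classKinf0.add_classKinf (hσ₂.classKinf0.add_classKinf (classKinf_const_mul hd)),
    (hγ₁.add_classKinf (hγ₂.add_classKinf (classKinf_const_mul hd))).classKinf0, ?_⟩
  intro t ht x u hu
  have hx := norm_nonneg x
  have hu' := S.Unorm_nonneg u
  have hσ₁x := hσ₁.1.nonneg hx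
  have hσ₂x := hσ₂.1.nonneg hx
  have hγ₁u := hγ₁.nonneg hu'
  have hγ₂u := hγ₂.nonneg hu'
  by_cases hsmall : ‖x‖ ≤ r ∧ S.Unorm u ≤ r
  · have := hloc t ht x hsmall.1 u hu hsmall.2
    nlinarith
  · have hlarge : r ≤ ‖x‖ + S.Unorm u := by
      rw [not_and_or, not_le, not_le] at hsmall
      rcases hsmall with h | h <;> linarith
    have hc_le : c ≤ d * ‖x‖ + d * S.Unorm u := by
      calc c = d * r := (div_mul_cancel₀ c hr.ne').symm
        _ ≤ d * (‖x‖ + S.Unorm u) := mul_le_mul_of_nonneg_left hlarge hd.le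
        _ = d * ‖x‖ + d * S.Unorm u := mul_add _ _ _
    have := hbdd t ht x u hu
    linarith

theorem UGS.ULS {S : ControlSystem X U} (h : S.UGS) : S.ULS :=
  let ⟨σ, γ, hσ, hγ, hglob⟩ := h
  ⟨σ, γ, hσ, hγ, 1, one_pos, fun t ht x _ u hu _ => hglob t ht x u hu⟩

theorem UGS.UGB {S : ControlSystem X U} (h : S.UGS) : S.UGB :=
  let ⟨σ, γ, hσ, hγ, hglob⟩ := h
  ⟨σ, γ, 1, hσ, hγ, one_pos, fun t ht x u hu =>
    (hglob t ht x u hu).trans (le_add_of_nonneg_right zero_le_one)⟩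

/-- A forward complete control system is ULS and UGB if and only if it is UGS. -/
theorem ULS_and_UGB_iff_UGS (S : ControlSystem X U) :
    (S.ULS ∧ S.UGB) ↔ S.UGS :=
  ⟨fun h => UGS_of_ULS_of_UGB h.1 h.2, fun h => ⟨h.ULS, h.UGB⟩⟩

end ControlSystem
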